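/- Let K be a class of finite undirected graphs and let W be a finite undirected graph. Then W ∈ Mod qId K if and only if: (1) for every one-element connected component H of W there exist a graph G_H ∈ K and a strong homomorphism φ_H : H → G_H; and (2) for every pair a, a' of distinct vertices belonging to the same connected component H of W, there exist a graph G_{a,a'} ∈ K and a strong homomorphism φ : H → G_{a,a'} with φ(a) ≠ φ(a'). -/

import Mathlib

open Classical

/-- A graph `(V, E)`: an ambient type `U`, a set `verts ⊆ U` of vertices and an
edge relation `Edge ⊆ verts × verts`. -/
structure AGraph : Type 1 where
  U : Type
  verts : Set U
  Edge : U → U → Prop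
  edge_mem : ∀ a b, Edge a b → a ∈ verts ∧ b ∈ verts

namespace AGraph

/-- The induced subgraph of `G` on a set `S`. -/
def induce (G : AGraph) (S : Set G.U) : AGraph where
  U := G.U
  verts := G.verts ∩ S
  Edge a b := G.Edge a b ∧ a ∈ S ∧ b ∈ S
  edge_mem a b h := ⟨⟨(G.edge_mem a b h.1).1, h.2.1⟩, (G.edge_mem a b h.1).2, h.2.2⟩

/-- The set of vertices reachable from `a` by a directed walk (including `a` itself). -/
def reachSet (G : AGraph) (a : G.U) : Set G.U := {b | Relation.ReflTransGen G.Edge a b}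

/-- The subgraph of `G` induced by the set of vertices reachable from `a`. -/
def reachSub (G : AGraph) (a : G.U) : AGraph := G.induce (G.reachSet a)

/-- A graph is undirected if its edge relation is symmetric. -/
def Undirected (G : AGraph) : Prop := ∀ a b, G.Edge a b → G.Edge b a

end AGraph

/-- A homomorphism of graphs: maps vertices to vertices and edges to edges. -/
def IsHom (G H : AGraph) (f : G.U → H.U) : Prop :=
  (∀ a ∈ G.verts, f a ∈ H.verts) ∧ ∀ a b, G.Edge a b → H.Edge (f a) (f b)

/-- A strong homomorphism: additionally maps non-edges to non-edges. -/
def IsStrongHom (G H : AGraph) (f : G.U → H.U) : Prop :=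
  IsHom G H f ∧ ∀ a ∈ G.verts, ∀ b ∈ G.verts, ¬ G.Edge a b → ¬ H.Edge (f a) (f b)

/-- Isomorphism of graphs. -/
def IsIsomorphic (G H : AGraph) : Prop :=
  ∃ f : G.U → H.U, Set.BijOn f G.verts H.verts ∧
    ∀ a ∈ G.verts, ∀ b ∈ G.verts, (G.Edge a b ↔ H.Edge (f a) (f b))

/-- Terms of type (2,0) over a variable set `X`: variables, the constant `∞`,
and a binary operation (juxtaposition). -/
inductive GTerm (X : Type) : Type
  | var : X → GTerm X
  | inf : GTerm X
  | app : GTerm X → GTerm X → GTerm X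

namespace GTerm

/-- The set of variables occurring in a term. -/
def vars {X : Type} : GTerm X → Set X
  | var x => {x}
  | inf => ∅
  | app t₁ t₂ => t₁.vars ∪ t₂.vars

/-- A term is nontrivial if it contains no occurrence of `∞`. -/
def Nontrivial {X : Type} : GTerm X → Prop
  | var _ => True
  | inf => False
  | app t₁ t₂ => t₁.Nontrivial ∧ t₂.Nontrivial

/-- The leftmost variable of a term (`none` for the bare constant `∞` on the left). -/
def leftVar {X : Type} : GTerm X → Option X
  | var x => some x
  | inf => none
  | app t₁ _ => t₁.leftVar

/-- The edge set of the term graph `G(t)`. -/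
def edges {X : Type} : GTerm X → Set (X × X)
  | var _ => ∅
  | inf => ∅
  | app t₁ t₂ =>
      t₁.edges ∪ t₂.edges ∪
        {p | ∃ x y, t₁.leftVar = some x ∧ t₂.leftVar = some y ∧ p = (x, y)}

theorem vars_finite {X : Type} (t : GTerm X) : t.vars.Finite := by
  induction t with
  | var x => simpa [vars] using Set.finite_singleton x
  | inf => simpa [vars] using Set.finite_empty
  | app t₁ t₂ ih₁ ih₂ => simpa [vars] using ih₁.union ih₂

end GTerm

/-- The term graph `G(t)` of a term `t`: vertices are the variables of `t`. -/
def termGraph {X : Type} (t : GTerm X) : AGraph where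
  U := X
  verts := t.vars
  Edge a b := (a, b) ∈ t.edges ∧ a ∈ t.vars ∧ b ∈ t.vars
  edge_mem a b h := ⟨h.2.1, h.2.2⟩

/-- Evaluation of a term in the graph algebra `A(G)`; `none` plays the role of `∞`:
`x · y = x` if `(x,y)` is an edge, and `∞` otherwise. -/
noncomputable def AGraph.eval (G : AGraph) {X : Type} (h : X → Option G.U) :
    GTerm X → Option G.U
  | .var x => h x
  | .inf => none
  | .app t₁ t₂ =>
      match G.eval h t₁, G.eval h t₂ with
      | some a, some b => if G.Edge a b then some a else none
      | _, _ => none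

/-- Identities: pairs of terms. -/
abbrev GId (X : Type) := GTerm X × GTerm X

/-- An assignment takes values in `V(G) ∪ {∞}`. -/
def AGraph.Assign (G : AGraph) {X : Type} (h : X → Option G.U) : Prop :=
  ∀ x a, h x = some a → a ∈ G.verts

/-- The assignment `h` makes the identity `e` true in `A(G)`. -/
def AGraph.SatIdWith (G : AGraph) {X : Type} (h : X → Option G.U) (e : GId X) : Prop :=
  G.eval h e.1 = G.eval h e.2

/-- `G` satisfies the identity `e`. -/
def AGraph.SatId (G : AGraph) {X : Type} (e : GId X) : Prop :=
  ∀ h : X → Option G.U, G.Assign h → G.SatIdWith h e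

/-- An implication (quasi-identity) over the standard countably infinite
variable set `ℕ`: a finite set of identities (the premise) and an identity
(the consequence). -/
structure Imp : Type where
  prem : Set (GId ℕ)
  concl : GId ℕ
  prem_fin : prem.Finite

/-- `G` satisfies the implication `imp`. -/
def AGraph.SatImp (G : AGraph) (imp : Imp) : Prop :=
  ∀ h : ℕ → Option G.U, G.Assign h →
    (∀ e ∈ imp.prem, G.SatIdWith h e) → G.SatIdWith h imp.concl

/-- The implications satisfied by every member of a class `K` of graphs. -/
def qId (K : Set AGraph) : Set Imp := {imp | ∀ G ∈ K, G.SatImp imp}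

/-- The class of graphs satisfying every implication of `Sg`. -/
def ModI (Sg : Set Imp) : Set AGraph := {G | ∀ imp ∈ Sg, G.SatImp imp}

/-- The finite members of `ModI Sg`. -/
def ModIf (Sg : Set Imp) : Set AGraph := {G | G ∈ ModI Sg ∧ G.verts.Finite}

/-- The pointed graph `G^⊥`: a new vertex `⊥ = none` with edges from `⊥` to all
vertices, including a loop at `⊥`. -/
def AGraph.pointed (G : AGraph) : AGraph where
  U := Option G.U
  verts := insert none (some '' G.verts)
  Edge a b := b ∈ insert none (some '' G.verts) ∧
    (a = none ∨ ∃ u v, a = some u ∧ b = some v ∧ G.Edge u v)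
  edge_mem a b h := by
    refine ⟨?_, h.1⟩
    rcases h.2 with rfl | ⟨u, v, rfl, rfl, huv⟩
    · exact Set.mem_insert _ _
    · exact Set.mem_insert_of_mem _ ⟨u, (G.edge_mem u v huv).1, rfl⟩

/-- Direct product of a family of graphs (componentwise edges). -/
def gProd {I : Type} (G : I → AGraph) : AGraph where
  U := (i : I) → (G i).U
  verts := {a | ∀ i, a i ∈ (G i).verts}
  Edge a b := ∀ i, (G i).Edge (a i) (b i)
  edge_mem a b h :=
    ⟨fun i => ((G i).edge_mem _ _ (h i)).1, fun i => ((G i).edge_mem _ _ (h i)).2⟩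

/-- The pointed product `∏ i, (G i)^⊥` of a family of graphs. -/
def pointedProd {I : Type} (G : I → AGraph) : AGraph := gProd fun i => (G i).pointed

/-- `W` is a strong pointed subproduct of the family `G`:
(1) `W` is an induced subgraph of the pointed product;
(2) every vertex has nonempty support;
(3) for every vertex `a` and every `k` in the support of `a`, the projection `p k`
restricted to `reach_W(a)` is a strong homomorphism into `G k`. -/
def IsSPSofFam {I : Type} (G : I → AGraph) (W : AGraph) : Prop :=
  ∃ S : Set (pointedProd G).U,
    W = (pointedProd G).induce S ∧
    (∀ a ∈ ((pointedProd G).induce S).verts, ∃ i, a i ≠ none) ∧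
    (∀ a ∈ ((pointedProd G).induce S).verts, ∀ k : I, a k ≠ none →
      (∀ b ∈ (((pointedProd G).induce S).reachSub a).verts, b k ≠ none) ∧
      (∀ b ∈ (((pointedProd G).induce S).reachSub a).verts,
        ∀ u, b k = some u → u ∈ (G k).verts) ∧
      (∀ b ∈ (((pointedProd G).induce S).reachSub a).verts,
       ∀ c ∈ (((pointedProd G).induce S).reachSub a).verts,
        ∀ u v, b k = some u → c k = some v →
          ((((pointedProd G).induce S).reachSub a).Edge b c ↔ (G k).Edge u v)))

/-- The class of all strong pointed subproducts of families of members of `K`. -/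
def Psps (K : Set AGraph) : Set AGraph :=
  {W | ∃ (I : Type) (G : I → AGraph), (∀ i, G i ∈ K) ∧ IsSPSofFam G W}

/-- The finite members of `Psps K`. -/
def PspsFin (K : Set AGraph) : Set AGraph := {W | W ∈ Psps K ∧ W.verts.Finite}

/-- Isomorphic copies of members of a class of graphs. -/
def Icl (C : Set AGraph) : Set AGraph := {W | ∃ V ∈ C, IsIsomorphic V W}

/-- `W` is the union of a directed family of members of `C` (the members of the
family are induced subgraphs of a common member, pairwise). -/
def IsDirUnionOf (W : AGraph) (C : Set AGraph) : Prop :=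
  ∃ (ι : Type) (V : ι → Set W.U) (E : ι → W.U → W.U → Prop)
    (hmem : ∀ i, ∀ a b, E i a b → a ∈ V i ∧ b ∈ V i),
    (∀ i, AGraph.mk W.U (V i) (E i) (hmem i) ∈ C) ∧
    (∀ i j, ∃ k,
      (V i ⊆ V k ∧ ∀ a b, E i a b ↔ E k a b ∧ a ∈ V i ∧ b ∈ V i) ∧
      (V j ⊆ V k ∧ ∀ a b, E j a b ↔ E k a b ∧ a ∈ V j ∧ b ∈ V j)) ∧
    W.verts = ⋃ i, V i ∧
    ∀ a b, W.Edge a b ↔ ∃ i, E i a b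

/-- The class of all directed unions of members of `C`. -/
def DCl (C : Set AGraph) : Set AGraph := {W | IsDirUnionOf W C}

/-- Condition (a) of Proposition `IPK-ab`. -/
def CondA (K : Set AGraph) (W : AGraph) : Prop :=
  ∀ a ∈ W.verts, ∃ Ga ∈ K, ∃ φ : W.U → Ga.U, IsStrongHom (W.reachSub a) Ga φ

/-- Condition (b) of Proposition `IPK-ab`. -/
def CondB (K : Set AGraph) (W : AGraph) : Prop :=
  ∀ a ∈ W.verts, ∀ a' ∈ W.verts, a ≠ a' → W.reachSet a = W.reachSet a' →
    ∃ Gp ∈ K, ∃ φ : W.U → Gp.U, IsStrongHom (W.reachSub a) Gp φ ∧ φ a ≠ φ a'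

/-- The identities `x_a x_b ≈ x_a` for edges `(a,b)` of `G` (variables are the
vertices of `G`). -/
def GammaE (G : AGraph) : Set (GId G.U) :=
  {e | ∃ a b, G.Edge a b ∧ e = (GTerm.app (GTerm.var a) (GTerm.var b), GTerm.var a)}

/-- The identities `x_a x_b ≈ ∞` for non-edges `(a,b)` of `G`. -/
def GammaN (G : AGraph) : Set (GId G.U) :=
  {e | ∃ a b, a ∈ G.verts ∧ b ∈ G.verts ∧ ¬ G.Edge a b ∧
    e = (GTerm.app (GTerm.var a) (GTerm.var b), GTerm.inf)}

/-- `Σ(G) = Γ_e(G) ∪ Γ_n(G)`. -/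
def SigmaIds (G : AGraph) : Set (GId G.U) := GammaE G ∪ GammaN G

theorem SigmaIds_finite (G : AGraph) (hfin : G.verts.Finite) : (SigmaIds G).Finite := by
  classical
  have hsub : SigmaIds G ⊆
      (fun p : G.U × G.U =>
        if G.Edge p.1 p.2 then
          (GTerm.app (GTerm.var p.1) (GTerm.var p.2), GTerm.var p.1)
        else (GTerm.app (GTerm.var p.1) (GTerm.var p.2), GTerm.inf)) ''
        (G.verts ×ˢ G.verts) := by
    rintro e (⟨a, b, hab, rfl⟩ | ⟨a, b, ha, hb, hnab, rfl⟩)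
    · exact ⟨(a, b), Set.mk_mem_prod (G.edge_mem a b hab).1 (G.edge_mem a b hab).2,
        by simp [hab]⟩
    · exact ⟨(a, b), Set.mk_mem_prod ha hb, by simp [hnab]⟩
  exact ((hfin.prod hfin).image _).subset hsub

/-!
A strong homomorphism `φ` of the component of `a` into `G ∈ K` extends, by sending every
vertex outside the component to `∞`, to a homomorphism `A(W) → A(G)` of graph algebras. Such
maps transport the premises of an implication of `qId K` from `W` to `G`, hence also its
conclusion back, and conditions (1) and (2) provide enough of them to separate any two
distinct elements of `A(W)`.

Conversely, for a finite component `C = reach_W(a)`, an assignment in `G` satisfying the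
diagram of `C` (`x_u x_v ≈ x_u` for edges, `x_u x_v ≈ ∞` for non-edges) with `x_a ≠ ∞` is
the same as a strong homomorphism `C → G`. So if no such homomorphism exists, resp. none
separates `a` from `a'`, then `diagram(C) → x_a ≈ ∞`, resp. `diagram(C) → x_a ≈ x_a'`,
lies in `qId K` but fails in `W`. Since `W` is undirected, the component is also generated by
`a'`, so `x_a' ≠ ∞` forces `x_a ≠ ∞` as well.
-/

lemma IsStrongHom.edge_iff {G H : AGraph} {φ : G.U → H.U} (hφ : IsStrongHom G H φ)
    {u v : G.U} (hu : u ∈ G.verts) (hv : v ∈ G.verts) : G.Edge u v ↔ H.Edge (φ u) (φ v) :=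
  ⟨hφ.1.2 u v, not_imp_not.1 (hφ.2 u hu v hv)⟩

namespace AGraph

variable {W G : AGraph}

lemma reachSet_subset_verts {a : W.U} (ha : a ∈ W.verts) : W.reachSet a ⊆ W.verts := by
  intro b hb
  induction hb with
  | refl => exact ha
  | tail _ h _ => exact (W.edge_mem _ _ h).2

lemma reachSet_eq_of_mem (hW : W.Undirected) {a b : W.U} (hb : b ∈ W.reachSet a) :
    W.reachSet b = W.reachSet a := by
  have hba : a ∈ W.reachSet b := by
    induction hb with
    | refl => exact .refl
    | tail _ h ih => exact .head (hW _ _ h) ih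
  ext c
  exact ⟨fun hc => hb.trans hc, fun hc => hba.trans hc⟩

noncomputable def mul (G : AGraph) : Option G.U → Option G.U → Option G.U
  | some u, some v => if G.Edge u v then some u else none
  | _, _ => none

lemma eval_app {X : Type} (h : X → Option G.U) (t₁ t₂ : GTerm X) :
    G.eval h (.app t₁ t₂) = G.mul (G.eval h t₁) (G.eval h t₂) := rfl

lemma eq_of_mul_eq_some {x y : Option G.U} {u : G.U} (hxy : G.mul x y = some u) :
    x = some u := by
  rcases x with _ | x <;> rcases y with _ | y <;> simp only [mul, reduceCtorEq] at hxy
  split_ifs at hxy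
  exact hxy

lemma mul_none_left (y : Option G.U) : G.mul none y = none := by cases y <;> rfl

lemma mul_none_right (x : Option G.U) : G.mul x none = none := by cases x <;> rfl

lemma mul_some_some (u v : G.U) :
    G.mul (some u) (some v) = if G.Edge u v then some u else none := rfl

lemma eval_mem_verts {X : Type} {h : X → Option G.U} (hh : G.Assign h) (t : GTerm X)
    {u : G.U} (hu : G.eval h t = some u) : u ∈ G.verts := by
  induction t with
  | var x => exact hh x u hu
  | inf => cases hu
  | app t₁ _ ih₁ _ => exact ih₁ (eq_of_mul_eq_some hu)

noncomputable def componentMap (W : AGraph) {G : AGraph} (a : W.U) (φ : W.U → G.U) :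
    Option W.U → Option G.U
  | some u => if u ∈ (W.reachSub a).verts then some (φ u) else none
  | none => none

section componentMap

variable {a : W.U} {φ : W.U → G.U}

lemma componentMap_none : W.componentMap a φ none = none := rfl

lemma componentMap_of_mem {u : W.U} (hu : u ∈ (W.reachSub a).verts) :
    W.componentMap a φ (some u) = some (φ u) := if_pos hu

lemma componentMap_of_notMem {u : W.U} (hu : u ∉ (W.reachSub a).verts) :
    W.componentMap a φ (some u) = none := if_neg hu

/-- A component is closed under edges, so a strong homomorphism of it extends to a
homomorphism of graph algebras. -/
lemma componentMap_mul (hφ : IsStrongHom (W.reachSub a) G φ) (x y : Option W.U) :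
    W.componentMap a φ (W.mul x y) = G.mul (W.componentMap a φ x) (W.componentMap a φ y) := by
  rcases x with _ | u
  · simp only [mul_none_left, componentMap_none]
  rcases y with _ | v
  · simp only [mul_none_right, componentMap_none]
  rw [mul_some_some]
  by_cases hu : u ∈ (W.reachSub a).verts
  swap
  · rw [componentMap_of_notMem hu, mul_none_left]
    split_ifs <;> simp only [componentMap_of_notMem hu, componentMap_none]
  by_cases hv : v ∈ (W.reachSub a).verts
  · have hedge : W.Edge u v ↔ G.Edge (φ u) (φ v) := by
      rw [← hφ.edge_iff hu hv]
      exact ⟨fun h => ⟨h, hu.2, hv.2⟩, And.left⟩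
    rw [componentMap_of_mem hu, componentMap_of_mem hv, mul_some_some, ← hedge]
    split_ifs
    exacts [componentMap_of_mem hu, componentMap_none]
  · have hnedge : ¬ W.Edge u v := fun h => hv ⟨(W.edge_mem u v h).2, hu.2.tail h⟩
    rw [if_neg hnedge, componentMap_of_notMem hv, mul_none_right, componentMap_none]

lemma eval_componentMap (hφ : IsStrongHom (W.reachSub a) G φ) {X : Type}
    (h : X → Option W.U) (t : GTerm X) :
    G.eval (W.componentMap a φ ∘ h) t = W.componentMap a φ (W.eval h t) := by
  induction t with
  | var x => rfl
  | inf => rfl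
  | app t₁ t₂ ih₁ ih₂ => rw [eval_app, eval_app, ih₁, ih₂, componentMap_mul hφ]

lemma assign_componentMap (hφ : IsStrongHom (W.reachSub a) G φ) {X : Type}
    (h : X → Option W.U) : G.Assign (W.componentMap a φ ∘ h) := by
  intro x q hq
  rcases hx : h x with _ | u <;> simp only [Function.comp_apply, hx, componentMap] at hq
  · cases hq
  split_ifs at hq with hu
  cases hq
  exact hφ.1.1 u hu

lemma componentMap_eval_concl (hφ : IsStrongHom (W.reachSub a) G φ) {imp : Imp}
    (hG : G.SatImp imp) {h : ℕ → Option W.U} (hprem : ∀ e ∈ imp.prem, W.SatIdWith h e) :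
    W.componentMap a φ (W.eval h imp.concl.1) = W.componentMap a φ (W.eval h imp.concl.2) := by
  have hsat := hG _ (assign_componentMap hφ h) fun e he => by
    simp only [SatIdWith, eval_componentMap hφ, show W.eval h e.1 = W.eval h e.2 from hprem e he]
  simpa only [SatIdWith, eval_componentMap hφ] using hsat

end componentMap

/-- The member of `SigmaIds W` for the pair `(u, v)`, with variables renamed along `e`. -/
noncomputable def diagId (W : AGraph) (e : W.U → ℕ) (u v : W.U) : GId ℕ :=
  (.app (.var (e u)) (.var (e v)), if W.Edge u v then .var (e u) else .inf)

noncomputable def diagImp (W : AGraph) (e : W.U → ℕ) {S : Set W.U} (hS : S.Finite)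
    (concl : GId ℕ) : Imp :=
  ⟨(fun p => W.diagId e p.1 p.2) '' (S ×ˢ S), concl, (hS.prod hS).image _⟩

lemma satIdWith_diagId_iff {e : W.U → ℕ} {h : ℕ → Option G.U} {u v : W.U} :
    G.SatIdWith h (W.diagId e u v) ↔
      ∀ p, h (e u) = some p → (W.Edge u v ↔ ∃ q, h (e v) = some q ∧ G.Edge p q) := by
  simp only [SatIdWith, diagId, eval_app]
  rcases hu : h (e u) with _ | p <;> rcases hv : h (e v) with _ | q <;>
    by_cases huv : W.Edge u v <;>
    simp [eval, hu, hv, huv, mul_none_left, mul_none_right, mul_some_some]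

lemma forall_prem_diagImp_iff {e : W.U → ℕ} {S : Set W.U} {hS : S.Finite} {concl : GId ℕ}
    {h : ℕ → Option G.U} :
    (∀ i ∈ (W.diagImp e hS concl).prem, G.SatIdWith h i) ↔
      ∀ u ∈ S, ∀ v ∈ S, G.SatIdWith h (W.diagId e u v) := by
  simp only [diagImp, Set.forall_mem_image, Set.forall_prod_set]

lemma exists_strongHom_of_satIdWith_diagId {e : W.U → ℕ} {h : ℕ → Option G.U}
    (hh : G.Assign h) {a : W.U}
    (hdiag : ∀ u ∈ W.reachSet a, ∀ v ∈ W.reachSet a, G.SatIdWith h (W.diagId e u v))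
    {p : G.U} (hp : h (e a) = some p) :
    ∃ φ : W.U → G.U, IsStrongHom (W.reachSub a) G φ ∧
      ∀ v ∈ W.reachSet a, h (e v) = some (φ v) := by
  have hsome : ∀ v ∈ W.reachSet a, ∃ q, h (e v) = some q := by
    intro v (hv : Relation.ReflTransGen W.Edge a v)
    induction hv with
    | refl => exact ⟨p, hp⟩
    | tail hu huv ih =>
      obtain ⟨q, hq⟩ := ih
      obtain ⟨q', hq', -⟩ := (satIdWith_diagId_iff.1 (hdiag _ hu _ (hu.tail huv)) q hq).1 huv
      exact ⟨q', hq'⟩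
  set φ : W.U → G.U := fun v => (h (e v)).getD p
  have hφ : ∀ v ∈ W.reachSet a, h (e v) = some (φ v) := fun v hv => by
    obtain ⟨q, hq⟩ := hsome v hv
    simp [φ, hq]
  have hedge : ∀ u ∈ W.reachSet a, ∀ v ∈ W.reachSet a,
      (W.Edge u v ↔ G.Edge (φ u) (φ v)) := fun u hu v hv => by
    rw [satIdWith_diagId_iff.1 (hdiag u hu v hv) _ (hφ u hu), hφ v hv]
    simp
  refine ⟨φ, ⟨⟨fun v hv => hh _ _ (hφ v hv.2), fun u v huv => ?_⟩, ?_⟩, hφ⟩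
  · exact (hedge u huv.2.1 v huv.2.2).1 huv.1
  · exact fun u hu v hv hnuv hG => hnuv ⟨(hedge u hu.2 v hv.2).2 hG, hu.2, hv.2⟩

lemma satIdWith_diagId_of_eq_some {e : W.U → ℕ} {h : ℕ → Option W.U} {u v : W.U}
    (hu : h (e u) = some u) (hv : h (e v) = some v) : W.SatIdWith h (W.diagId e u v) :=
  satIdWith_diagId_iff.2 fun p hp => by
    obtain rfl := Option.some.inj (hu.symm.trans hp)
    simp [hv]

/-- Evaluating the variables `e v` at the vertices `v ∈ S` themselves satisfies the diagram
of `S`, so the conclusion of a diagram implication holds there. -/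
lemma exists_eval_eq_of_satImp_diagImp {S : Set W.U} (hS : S.Finite) (hSW : S ⊆ W.verts)
    {e : W.U → ℕ} (he : S.InjOn e) {u : W.U} (hu : u ∈ S) {t : GTerm ℕ}
    (hW : W.SatImp (W.diagImp e hS (.var (e u), t))) :
    ∃ h : ℕ → Option W.U, (∀ v ∈ S, h (e v) = some v) ∧ W.eval h t = some u := by
  let h : ℕ → Option W.U := fun n => if hn : ∃ v ∈ S, e v = n then some hn.choose else none
  have hh : W.Assign h := fun n v hv => by
    by_cases hn : ∃ v ∈ S, e v = n
    · simp only [h, dif_pos hn, Option.some.injEq] at hv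
      exact hv ▸ hSW hn.choose_spec.1
    · simp [h, dif_neg hn] at hv
  have hhe : ∀ v ∈ S, h (e v) = some v := fun v hv => by
    have hn : ∃ w ∈ S, e w = e v := ⟨v, hv, rfl⟩
    simp only [h, dif_pos hn, he hn.choose_spec.1 hv hn.choose_spec.2]
  refine ⟨h, hhe, (hW h hh ?_).symm.trans (hhe u hu)⟩
  exact forall_prem_diagImp_iff.2 fun v hv w hw =>
    satIdWith_diagId_of_eq_some (hhe v hv) (hhe w hw)

end AGraph

section Backward

open AGraph

variable {K : Set AGraph} {W : AGraph}

lemma exists_strongHom_of_singleton_of_separating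
    (h1 : ∀ a ∈ W.verts, W.reachSet a = {a} →
      ∃ G ∈ K, ∃ φ : W.U → G.U, IsStrongHom (W.reachSub a) G φ)
    (h2 : ∀ a ∈ W.verts, ∀ a' ∈ W.verts, a ≠ a' → a' ∈ W.reachSet a →
      ∃ G ∈ K, ∃ φ : W.U → G.U, IsStrongHom (W.reachSub a) G φ ∧ φ a ≠ φ a')
    {a : W.U} (ha : a ∈ W.verts) :
    ∃ G ∈ K, ∃ φ : W.U → G.U, IsStrongHom (W.reachSub a) G φ := by
  by_cases hsing : W.reachSet a = {a}
  · exact h1 a ha hsing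
  obtain ⟨b, hb, hba⟩ : ∃ b ∈ W.reachSet a, b ≠ a := by
    by_contra! hc
    exact hsing (Set.eq_singleton_iff_unique_mem.2 ⟨.refl, hc⟩)
  obtain ⟨G, hG, φ, hφ, -⟩ := h2 a ha b (W.reachSet_subset_verts ha hb) hba.symm hb
  exact ⟨G, hG, φ, hφ⟩

lemma eq_of_forall_componentMap_eq {x y : Option W.U}
    (hx : ∀ u, x = some u → u ∈ W.verts) (hy : ∀ v, y = some v → v ∈ W.verts)
    (h1 : ∀ a ∈ W.verts, ∃ G ∈ K, ∃ φ : W.U → G.U, IsStrongHom (W.reachSub a) G φ)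
    (h2 : ∀ a ∈ W.verts, ∀ a' ∈ W.verts, a ≠ a' → a' ∈ W.reachSet a →
      ∃ G ∈ K, ∃ φ : W.U → G.U, IsStrongHom (W.reachSub a) G φ ∧ φ a ≠ φ a')
    (hxy : ∀ a, ∀ G ∈ K, ∀ φ : W.U → G.U, IsStrongHom (W.reachSub a) G φ →
      W.componentMap a φ x = W.componentMap a φ y) :
    x = y := by
  have self_mem : ∀ {u}, u ∈ W.verts → u ∈ (W.reachSub u).verts := fun hu => ⟨hu, .refl⟩
  rcases x with _ | u <;> rcases y with _ | v
  · rfl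
  · obtain ⟨G, hG, φ, hφ⟩ := h1 v (hy v rfl)
    simpa [componentMap_none, componentMap_of_mem (self_mem (hy v rfl))] using
      hxy v G hG φ hφ
  · obtain ⟨G, hG, φ, hφ⟩ := h1 u (hx u rfl)
    simpa [componentMap_none, componentMap_of_mem (self_mem (hx u rfl))] using
      hxy u G hG φ hφ
  by_contra hne
  have hu := hx u rfl
  have hv := hy v rfl
  by_cases hreach : v ∈ W.reachSet u
  · obtain ⟨G, hG, φ, hφ, hsep⟩ := h2 u hu v hv (fun h => hne (h ▸ rfl)) hreach
    have := hxy u G hG φ hφ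
    rw [componentMap_of_mem (self_mem hu), componentMap_of_mem ⟨hv, hreach⟩] at this
    exact hsep (Option.some.inj this)
  · obtain ⟨G, hG, φ, hφ⟩ := h1 u hu
    have := hxy u G hG φ hφ
    rw [componentMap_of_mem (self_mem hu),
      componentMap_of_notMem fun h => hreach h.2] at this
    cases this

theorem mem_modI_qId_of_exists_strongHom
    (h1 : ∀ a ∈ W.verts, ∃ G ∈ K, ∃ φ : W.U → G.U, IsStrongHom (W.reachSub a) G φ)
    (h2 : ∀ a ∈ W.verts, ∀ a' ∈ W.verts, a ≠ a' → a' ∈ W.reachSet a →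
      ∃ G ∈ K, ∃ φ : W.U → G.U, IsStrongHom (W.reachSub a) G φ ∧ φ a ≠ φ a') :
    W ∈ ModI (qId K) := by
  intro imp himp h hh hprem
  refine eq_of_forall_componentMap_eq (fun _ => eval_mem_verts hh _)
    (fun _ => eval_mem_verts hh _) h1 h2 fun a G hG φ hφ => ?_
  exact componentMap_eval_concl hφ (himp G hG) hprem

end Backward

section Forward

open AGraph

variable {K : Set AGraph} {W : AGraph}

theorem exists_strongHom_of_mem_modI_qId (hW : W ∈ ModI (qId K)) {a : W.U}
    (ha : a ∈ W.verts) (hfin : (W.reachSet a).Finite) :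
    ∃ G ∈ K, ∃ φ : W.U → G.U, IsStrongHom (W.reachSub a) G φ := by
  by_contra! hno
  obtain ⟨e, he⟩ := Set.countable_iff_exists_injOn.1 hfin.countable
  have himp : W.diagImp e hfin (.var (e a), .inf) ∈ qId K := by
    intro G hG h hh hprem
    show h (e a) = none
    by_contra hsome
    obtain ⟨p, hp⟩ := Option.ne_none_iff_exists'.1 hsome
    obtain ⟨φ, hφ, -⟩ :=
      exists_strongHom_of_satIdWith_diagId hh (forall_prem_diagImp_iff.1 hprem) hp
    exact hno G hG φ hφ
  obtain ⟨_, -, hinf⟩ := exists_eval_eq_of_satImp_diagImp hfin (reachSet_subset_verts ha) he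
    .refl (hW _ himp)
  cases hinf

theorem exists_strongHom_separating_of_mem_modI_qId (hWu : W.Undirected)
    (hW : W ∈ ModI (qId K)) {a a' : W.U} (ha : a ∈ W.verts) (hfin : (W.reachSet a).Finite)
    (hne : a ≠ a') (ha' : a' ∈ W.reachSet a) :
    ∃ G ∈ K, ∃ φ : W.U → G.U, IsStrongHom (W.reachSub a) G φ ∧ φ a ≠ φ a' := by
  by_contra! hno
  obtain ⟨e, he⟩ := Set.countable_iff_exists_injOn.1 hfin.countable
  have hreach := reachSet_eq_of_mem hWu ha'
  have himp : W.diagImp e hfin (.var (e a), .var (e a')) ∈ qId K := by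
    intro G hG h hh hprem
    have hdiag := forall_prem_diagImp_iff.1 hprem
    show h (e a) = h (e a')
    rcases hp : h (e a) with _ | p
    · rcases hp' : h (e a') with _ | p'
      · rfl
      rw [← hreach] at hdiag
      obtain ⟨φ, -, hφ⟩ := exists_strongHom_of_satIdWith_diagId hh hdiag hp'
      rw [hφ a (hreach ▸ .refl)] at hp
      cases hp
    · obtain ⟨φ, hφs, hφ⟩ := exists_strongHom_of_satIdWith_diagId hh hdiag hp
      rw [hφ a' ha', ← hno G hG φ hφs, ← hφ a .refl, hp]
  obtain ⟨h, hhe, ha'a⟩ := exists_eval_eq_of_satImp_diagImp hfin (reachSet_subset_verts ha) he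
    .refl (hW _ himp)
  exact hne (Option.some.inj ((hhe a' ha').symm.trans ha'a)).symm

end Forward

theorem statement_12_general (K : Set AGraph)
    (W : AGraph) (hWu : W.Undirected) (hWf : W.verts.Finite) :
    W ∈ ModI (qId K) ↔
      ((∀ a ∈ W.verts, W.reachSet a = {a} →
          ∃ GH ∈ K, ∃ φ : W.U → GH.U, IsStrongHom (W.reachSub a) GH φ) ∧
       (∀ a ∈ W.verts, ∀ a' ∈ W.verts, a ≠ a' → a' ∈ W.reachSet a →
          ∃ Gp ∈ K, ∃ φ : W.U → Gp.U,
            IsStrongHom (W.reachSub a) Gp φ ∧ φ a ≠ φ a')) := by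
  have hfin : ∀ a ∈ W.verts, (W.reachSet a).Finite := fun a ha =>
    hWf.subset (W.reachSet_subset_verts ha)
  constructor
  · intro hW
    exact ⟨fun a ha _ => exists_strongHom_of_mem_modI_qId hW ha (hfin a ha),
      fun a ha a' _ hne ha' =>
        exists_strongHom_separating_of_mem_modI_qId hWu hW ha (hfin a ha) hne ha'⟩
  · rintro ⟨h1, h2⟩
    exact mem_modI_qId_of_exists_strongHom
      (fun a ha => exists_strongHom_of_singleton_of_separating h1 h2 ha) h2

/-- for a class `K` of finite undirected graphs and a finite
undirected graph `W`, `W ∈ Mod qId K` iff (1) every one-element connected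
component of `W` admits a strong homomorphism into a member of `K`, and (2) any
two distinct vertices of a common connected component `H` of `W` are separated
by a strong homomorphism of `H` into a member of `K`. (In an undirected graph
the connected component of `a` is `reach_W(a)`.) -/
theorem statement_12 (K : Set AGraph) (hK : ∀ G ∈ K, G.Undirected ∧ G.verts.Finite)
    (W : AGraph) (hWu : W.Undirected) (hWf : W.verts.Finite) :
    W ∈ ModI (qId K) ↔
      ((∀ a ∈ W.verts, W.reachSet a = {a} →
          ∃ GH ∈ K, ∃ φ : W.U → GH.U, IsStrongHom (W.reachSub a) GH φ) ∧
       (∀ a ∈ W.verts, ∀ a' ∈ W.verts, a ≠ a' → a' ∈ W.reachSet a →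
          ∃ Gp ∈ K, ∃ φ : W.U → Gp.U,
            IsStrongHom (W.reachSub a) Gp φ ∧ φ a ≠ φ a')) :=
  statement_12_general K W hWu hWf
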